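/- arXiv:1806.03297 — 2 statements merged into one kernel-verified Lean document; each statement's English description precedes it below -/
import Mathlib

section
/- Let A and B be Archimedean f-algebras with unit elements e_A and e_B respectively (and point separating order duals), and let T : A → B be an order bounded linear operator satisfying T(e_A) = e_B and |Ta| ≤ e_B whenever |a| ≤ e_A. Then the following three conditions are equivalent: (i) T is an extreme point of the convex set of Markov operators from A to B; (ii) inf{ T|a − λe_A| : λ ∈ ℝ } = 0 in B for every a ∈ A; (iii) T is a lattice homomorphism. -/
/-!
An extreme Markov operator `T` is multiplicative against every `0 ≤ h ≤ 1`, since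
`T ± (x ↦ T (h * x) - T h * T x)` are again Markov operators (Phelps). In an `f`-algebra disjoint elements
have product zero and, in the Archimedean case, positive elements with product zero are disjoint;
hence `T (a⁺ ⊓ n)` and `T a⁻` are disjoint, and as `(a⁺ - n)⁺ ≤ a⁺ * a⁺ / 4n` the remainder
`T (a⁺ - n)⁺` disappears as `n → ∞`: `T` is a lattice homomorphism.

For a lattice homomorphism `T |a - λ| = |T a - λ|`, and `inf_λ |b - λ| = 0` in an Archimedean
unital `f`-algebra: a lower bound `c` of the `|b - k t|`, `k ∈ ℕ`, satisfies
`c ≤ t + b⁻ + (b - n t)⁺ ≤ t + b⁻ + b * b / 4nt`, so `c ≤ t + b⁻`, and likewise `c ≤ t + b⁺`.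

Finally, if `inf_λ T |a - λ| = 0` and `T = α S₁ + β S₂`, then `min α β • |S₁ a - S₂ a|` lies below
every `T |a - λ|`, so `S₁ = S₂`.
-/

class IsFAlgebra (A : Type*) [Ring A] [Lattice A] : Prop where
  mul_inf_eq_zero : ∀ x y z : A, 0 ≤ z → x ⊓ y = 0 → (x * z) ⊓ y = 0 ∧ (z * x) ⊓ y = 0

/-- The Archimedean property of vector lattices; Mathlib's `Archimedean` is much stronger outside
linear orders, as it makes every positive element a strong unit. -/
class IsArchimedeanLattice (α : Type*) [AddMonoid α] [Preorder α] : Prop where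
  nonpos_of_forall_nsmul_le : ∀ x y : α, (∀ n : ℕ, n • x ≤ y) → x ≤ 0

section LatticeOrderedGroup
variable {α : Type*} [AddCommGroup α] [Lattice α] [IsOrderedAddMonoid α]

theorem abs_sub_eq_add_of_inf_eq_zero {u v : α} (h : u ⊓ v = 0) : |u - v| = u + v := by
  rw [abs_sub_comm, ← sup_sub_inf_eq_abs_sub, h, sub_zero, ← inf_add_sup u v, h, zero_add]

theorem add_inf_le_inf_add {x y z : α} (hy : 0 ≤ y) : (x + y) ⊓ z ≤ x ⊓ z + y :=
  calc (x + y) ⊓ z ≤ (x + y) ⊓ (z + y) := inf_le_inf_left _ (le_add_of_nonneg_right hy)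
    _ = x ⊓ z + y := (inf_add _ _ _).symm

theorem posPart_posPart_sub {e : α} (he : 0 ≤ e) (x : α) : (x⁺ - e)⁺ = (x - e)⁺ := by
  refine le_antisymm ?_ (posPart_mono (sub_le_sub_right (le_posPart x) e))
  rw [posPart_def x, sup_sub, zero_sub, posPart_def]
  exact sup_le (sup_le (le_posPart _) ((neg_nonpos.2 he).trans (posPart_nonneg _)))
    (posPart_nonneg _)

theorem posPart_sub_add_inf {e : α} (he : 0 ≤ e) (x : α) : (x - e)⁺ + x⁺ ⊓ e = x⁺ := by
  rw [inf_eq_sub_posPart_sub, posPart_posPart_sub he]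
  abel

theorem abs_sub_le_posPart_sub_add {e : α} (he : 0 ≤ e) (x : α) :
    |x - e| ≤ (x - e)⁺ + (e + x⁻) := by
  rw [← posPart_add_negPart (x - e), negPart_def]
  gcongr
  refine sup_le ?_ (add_nonneg he (negPart_nonneg x))
  rw [neg_sub, sub_eq_add_neg]
  exact add_le_add_right (neg_le_negPart x) e

theorem le_add_posPart_sub_of_le_abs_sub {c x y e : α} (he : 0 ≤ e) (hey : e ≤ y)
    (h₁ : c ≤ y + x⁺) (h₂ : c ≤ |x - e|) : c ≤ y + (x - e)⁺ := by
  have h₁' : c ≤ y + (x - e)⁺ + x⁺ ⊓ e := by rwa [add_assoc, posPart_sub_add_inf he]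
  have h₂' : c ≤ y + (x - e)⁺ + x⁻ := by
    refine h₂.trans ((abs_sub_le_posPart_sub_add he x).trans ?_)
    rw [add_comm y, add_assoc]
    gcongr
  calc c ≤ (y + (x - e)⁺ + x⁺ ⊓ e) ⊓ (y + (x - e)⁺ + x⁻) := le_inf h₁' h₂'
    _ = y + (x - e)⁺ + x⁺ ⊓ e ⊓ x⁻ := (add_inf _ _ _).symm
    _ ≤ y + (x - e)⁺ + x⁺ ⊓ x⁻ := by gcongr; exact inf_le_left
    _ = y + (x - e)⁺ := by rw [posPart_inf_negPart_eq_zero, add_zero]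

/-- Pointwise: where `0 ≤ b ≤ n • e`, some `|b - k • e|` with `k ≤ n` is at most `e`. -/
theorem le_add_negPart_add_posPart_sub_nsmul {b c e : α} (he : 0 ≤ e)
    (h : ∀ n : ℕ, c ≤ |b - n • e|) (n : ℕ) : c ≤ e + b⁻ + (b - n • e)⁺ := by
  induction n with
  | zero =>
    calc c ≤ |b| := by simpa using h 0
      _ = b⁻ + b⁺ := by rw [← posPart_add_negPart, add_comm]
      _ ≤ e + b⁻ + b⁺ := by gcongr; exact le_add_of_nonneg_left he
      _ = e + b⁻ + (b - (0 : ℕ) • e)⁺ := by rw [zero_nsmul, sub_zero]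
  | succ n ih =>
    rw [succ_nsmul, sub_add_eq_sub_sub]
    refine le_add_posPart_sub_of_le_abs_sub he (le_add_of_nonneg_right (negPart_nonneg b)) ih ?_
    simpa only [succ_nsmul, sub_add_eq_sub_sub] using h (n + 1)

end LatticeOrderedGroup

section ArchimedeanModule
variable {E : Type*} [AddCommGroup E] [PartialOrder E] [Module ℝ E] [PosSMulMono ℝ E]
  [IsArchimedeanLattice E]

theorem nonpos_of_forall_le_inv_natCast_smul {y z : E} (hy : 0 ≤ y)
    (h : ∀ n : ℕ, 0 < n → z ≤ (n : ℝ)⁻¹ • y) : z ≤ 0 := by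
  refine IsArchimedeanLattice.nonpos_of_forall_nsmul_le z y fun n => ?_
  rcases n.eq_zero_or_pos with rfl | hn
  · simpa using hy
  · have := smul_le_smul_of_nonneg_left (h n hn) (n.cast_nonneg : (0 : ℝ) ≤ n)
    rwa [smul_smul, mul_inv_cancel₀ (by positivity), one_smul, Nat.cast_smul_eq_nsmul] at this

theorem nonpos_of_forall_le_smul {z e : E} (he : 0 ≤ e) (h : ∀ t : ℝ, 0 < t → z ≤ t • e) :
    z ≤ 0 :=
  nonpos_of_forall_le_inv_natCast_smul he fun n hn => h _ (by positivity)

end ArchimedeanModule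

namespace IsFAlgebra

section Ring
variable {A : Type*} [Ring A] [Lattice A] [IsFAlgebra A]

theorem mul_eq_zero_of_inf_eq_zero {x y : A} (h : x ⊓ y = 0) : x * y = 0 := by
  have hxy : x * y ⊓ y = 0 := (mul_inf_eq_zero x y y (h ▸ inf_le_right) h).1
  simpa using (mul_inf_eq_zero y (x * y) x (h ▸ inf_le_left) (by rwa [inf_comm])).2

theorem mul_self_eq_add [IsOrderedAddMonoid A] (a : A) : a * a = a⁺ * a⁺ + a⁻ * a⁻ := by
  have h₁ : a⁺ * a⁻ = 0 := mul_eq_zero_of_inf_eq_zero (posPart_inf_negPart_eq_zero a)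
  have h₂ : a⁻ * a⁺ = 0 := mul_eq_zero_of_inf_eq_zero (by rw [inf_comm, posPart_inf_negPart_eq_zero])
  conv_lhs => rw [← posPart_sub_negPart a]
  rw [sub_mul, mul_sub, mul_sub, h₁, h₂]
  abel

theorem isOrderedRing [IsOrderedAddMonoid A] (hmul : ∀ x y : A, 0 ≤ x → 0 ≤ y → 0 ≤ x * y) :
    IsOrderedRing A :=
  haveI : ZeroLEOneClass A := ⟨by
    rw [← mul_one (1 : A), mul_self_eq_add]
    exact add_nonneg (hmul _ _ (posPart_nonneg 1) (posPart_nonneg 1))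
      (hmul _ _ (negPart_nonneg 1) (negPart_nonneg 1))⟩
  .of_mul_nonneg hmul

end Ring

variable {A : Type*} [Ring A] [Lattice A] [IsOrderedRing A] [IsFAlgebra A]

theorem mul_self_nonneg (a : A) : 0 ≤ a * a := by
  rw [mul_self_eq_add]
  exact add_nonneg (mul_nonneg (posPart_nonneg a) (posPart_nonneg a))
    (mul_nonneg (negPart_nonneg a) (negPart_nonneg a))

variable [Algebra ℝ A] [PosSMulMono ℝ A]

/-- `(b - 2r)² ≥ 0` rearranged. -/
theorem posPart_sub_smul_one_le (b : A) {r : ℝ} (hr : 0 < r) :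
    (b - r • 1)⁺ ≤ (4 * r)⁻¹ • (b * b) := by
  have key : (4 * r) • (b - r • 1) ≤ b * b := by
    have hsq : (b - (2 * r) • (1 : A)) * (b - (2 * r) • 1) = b * b - (4 * r) • (b - r • 1) := by
      simp only [sub_mul, mul_sub, smul_mul_assoc, mul_smul_comm, one_mul, mul_one]
      module
    simpa [hsq, sub_nonneg] using mul_self_nonneg (b - (2 * r) • (1 : A))
  rw [posPart_def]
  exact sup_le ((le_inv_smul_iff_of_pos (by positivity)).2 key)
    (smul_nonneg (by positivity) (mul_self_nonneg b))

variable [IsArchimedeanLattice A]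

theorem eq_zero_of_mul_self_eq_zero {s : A} (hs : 0 ≤ s) (h : s * s = 0) : s = 0 := by
  refine le_antisymm (nonpos_of_forall_le_smul zero_le_one fun t ht => ?_) hs
  have := posPart_sub_smul_one_le s ht
  rwa [h, smul_zero, posPart_nonpos, sub_nonpos] at this

theorem inf_eq_zero_of_mul_eq_zero {p q : A} (hp : 0 ≤ p) (hq : 0 ≤ q) (h : p * q = 0) :
    p ⊓ q = 0 := by
  have hs : 0 ≤ p ⊓ q := le_inf hp hq
  refine eq_zero_of_mul_self_eq_zero hs (le_antisymm ?_ (mul_nonneg hs hs))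
  exact h ▸ mul_le_mul inf_le_left inf_le_right hs hp

theorem le_smul_one_add_negPart {b c : A} (h : ∀ l : ℝ, c ≤ |b - l • 1|) {t : ℝ} (ht : 0 < t) :
    c ≤ t • 1 + b⁻ := by
  have grid : ∀ n : ℕ, c ≤ t • 1 + b⁻ + (b - n • t • (1 : A))⁺ :=
    le_add_negPart_add_posPart_sub_nsmul (smul_nonneg ht.le zero_le_one) fun n => by
      rw [← Nat.cast_smul_eq_nsmul ℝ, smul_smul]
      exact h _
  rw [← sub_nonpos]
  refine nonpos_of_forall_le_inv_natCast_smul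
    (smul_nonneg (by positivity) (mul_self_nonneg b) : 0 ≤ (4 * t)⁻¹ • (b * b)) fun n hn => ?_
  calc c - (t • 1 + b⁻) ≤ (b - n • t • (1 : A))⁺ := sub_le_iff_le_add'.2 (grid n)
    _ = (b - (n * t) • 1)⁺ := by rw [← Nat.cast_smul_eq_nsmul ℝ, smul_smul]
    _ ≤ (4 * (n * t))⁻¹ • (b * b) := posPart_sub_smul_one_le b (by positivity)
    _ = (n : ℝ)⁻¹ • (4 * t)⁻¹ • (b * b) := by rw [smul_smul]; ring_nf

theorem nonpos_of_forall_le_abs_sub_smul_one {b c : A} (h : ∀ l : ℝ, c ≤ |b - l • 1|) :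
    c ≤ 0 := by
  refine nonpos_of_forall_le_smul zero_le_one fun t ht => ?_
  have h₁ := le_smul_one_add_negPart h ht
  have h₂ := le_smul_one_add_negPart (b := -b) (fun l => by
    rw [← neg_add', abs_neg, ← sub_neg_eq_add, ← neg_smul]
    exact h (-l)) ht
  rw [negPart_neg] at h₂
  calc c ≤ (t • 1 + b⁻) ⊓ (t • 1 + b⁺) := le_inf h₁ h₂
    _ = t • 1 := by rw [← add_inf, inf_comm, posPart_inf_negPart_eq_zero, add_zero]

end IsFAlgebra

def markovOperators (A B : Type*) [Semiring A] [Preorder A] [Module ℝ A] [Semiring B] [Preorder B]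
    [Module ℝ B] : Set (A →ₗ[ℝ] B) :=
  {S | (∀ a : A, 0 ≤ a → 0 ≤ S a) ∧ S 1 = 1}

section OrderedAlgebra
variable {A B : Type*} [Ring A] [PartialOrder A] [IsOrderedRing A] [Algebra ℝ A]
  [Ring B] [PartialOrder B] [IsOrderedRing B] [Algebra ℝ B]

theorem map_mul_of_mem_extremePoints {T : A →ₗ[ℝ] B}
    (hT : T ∈ (markovOperators A B).extremePoints ℝ) {h : A} (h0 : 0 ≤ h) (h1 : h ≤ 1) (x : A) :
    T (h * x) = T h * T x := by
  obtain ⟨⟨hpos, hT1⟩, hext⟩ := hT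
  let R : A →ₗ[ℝ] B := T ∘ₗ LinearMap.mulLeft ℝ h - LinearMap.mulLeft ℝ (T h) ∘ₗ T
  have hR : ∀ y, R y = T (h * y) - T h * T y := fun _ => rfl
  have hTh : T h ≤ 1 := hT1 ▸ (monotone_iff_map_nonneg T).2 hpos h1
  have hplus : T + R ∈ markovOperators A B := by
    refine ⟨fun a ha => ?_, by simp [hR, hT1]⟩
    have : (T + R) a = T (h * a) + (1 - T h) * T a := by
      rw [LinearMap.add_apply, hR, sub_mul, one_mul]; abel
    rw [this]
    exact add_nonneg (hpos _ (mul_nonneg h0 ha)) (mul_nonneg (sub_nonneg.2 hTh) (hpos a ha))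
  have hminus : T - R ∈ markovOperators A B := by
    refine ⟨fun a ha => ?_, by simp [hR, hT1]⟩
    have : (T - R) a = T ((1 - h) * a) + T h * T a := by
      rw [LinearMap.sub_apply, hR, sub_mul, one_mul, map_sub]; abel
    rw [this]
    exact add_nonneg (hpos _ (mul_nonneg (sub_nonneg.2 h1) ha)) (mul_nonneg (hpos h h0) (hpos a ha))
  have hmid : T ∈ openSegment ℝ (T + R) (T - R) :=
    ⟨1 / 2, 1 / 2, by norm_num, by norm_num, by norm_num, by module⟩
  have hR0 : R = 0 := by simpa using hext hplus hminus hmid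
  simpa [hR, sub_eq_zero] using LinearMap.congr_fun hR0 x

theorem map_mul_of_mem_extremePoints_of_le_smul_one [PosSMulMono ℝ A] {T : A →ₗ[ℝ] B}
    (hT : T ∈ (markovOperators A B).extremePoints ℝ) {g : A} {r : ℝ} (hr : 0 < r) (g0 : 0 ≤ g)
    (gr : g ≤ r • 1) (x : A) : T (g * x) = T g * T x := by
  have := map_mul_of_mem_extremePoints hT (h := r⁻¹ • g) (smul_nonneg (by positivity) g0)
    ((inv_smul_le_iff_of_pos hr).2 gr) x
  rw [smul_mul_assoc, map_smul, map_smul, smul_mul_assoc] at this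
  exact smul_right_injective B (inv_ne_zero hr.ne') this

end OrderedAlgebra

section LatticeOrderedAlgebra
variable {A B : Type*} [Ring A] [Lattice A] [Algebra ℝ A] [Ring B] [Lattice B] [Algebra ℝ B]

theorem abs_map_le_map_abs [IsOrderedAddMonoid A] [IsOrderedAddMonoid B] {S : A →ₗ[ℝ] B}
    (hS : ∀ a, 0 ≤ a → 0 ≤ S a) (a : A) : |S a| ≤ S |a| := by
  have hmono := (monotone_iff_map_nonneg S).2 hS
  rw [abs_le']
  exact ⟨hmono (le_abs_self a), map_neg S a ▸ hmono (neg_le_abs a)⟩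

theorem mem_extremePoints_of_isGLB [IsOrderedAddMonoid A] [IsOrderedAddMonoid B]
    [IsOrderedModule ℝ B] {T : A →ₗ[ℝ] B} (hT1 : T 1 = 1)
    (h : ∀ a : A, IsGLB {x : B | ∃ l : ℝ, x = T |a - l • (1 : A)|} 0) :
    T ∈ (markovOperators A B).extremePoints ℝ := by
  have hpos : ∀ a : A, 0 ≤ a → 0 ≤ T a := fun a ha => by
    simpa [abs_of_nonneg ha] using (h a).1 ⟨0, rfl⟩
  refine ⟨⟨hpos, hT1⟩, ?_⟩
  rintro S₁ ⟨hS₁, hS₁1⟩ S₂ ⟨hS₂, hS₂1⟩ ⟨α, β, hα, hβ, hαβ, rfl⟩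
  suffices hS : S₁ = S₂ by rw [← hS, ← add_smul, hαβ, one_smul]
  ext a
  have hlow : min α β • |S₁ a - S₂ a| ∈
      lowerBounds {x : B | ∃ l : ℝ, x = (α • S₁ + β • S₂) |a - l • (1 : A)|} := by
    rintro _ ⟨l, rfl⟩
    set y := a - l • (1 : A)
    have hy : S₁ a - S₂ a = S₁ y - S₂ y := by simp [y, hS₁1, hS₂1]
    have hy₁ := hS₁ _ (abs_nonneg y)
    have hy₂ := hS₂ _ (abs_nonneg y)
    calc min α β • |S₁ a - S₂ a| ≤ min α β • (S₁ |y| + S₂ |y|) := by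
          rw [hy, sub_eq_add_neg]
          gcongr
          refine (abs_add_le _ _).trans ?_
          rw [abs_neg]
          exact add_le_add (abs_map_le_map_abs hS₁ y) (abs_map_le_map_abs hS₂ y)
      _ ≤ α • S₁ |y| + β • S₂ |y| := by
          rw [smul_add]
          exact add_le_add (smul_le_smul_of_nonneg_right (min_le_left α β) hy₁)
            (smul_le_smul_of_nonneg_right (min_le_right α β) hy₂)
      _ = (α • S₁ + β • S₂) |y| := rfl
  have habs : |S₁ a - S₂ a| ≤ 0 :=
    le_of_smul_le_smul_left (by rw [smul_zero]; exact (h a).2 hlow) (lt_min hα hβ)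
  exact sub_eq_zero.1 (le_antisymm ((le_abs_self _).trans habs)
    (neg_nonpos.1 ((neg_le_abs _).trans habs)))

theorem isGLB_map_abs_sub_smul_one [IsOrderedRing B] [PosSMulMono ℝ B] [IsFAlgebra B]
    [IsArchimedeanLattice B] {T : A →ₗ[ℝ] B} (hT1 : T 1 = 1) (hT : ∀ a : A, T |a| = |T a|)
    (a : A) : IsGLB {x : B | ∃ l : ℝ, x = T |a - l • (1 : A)|} 0 := by
  have hTl : ∀ l : ℝ, T |a - l • 1| = |T a - l • 1| := fun l => by
    rw [hT, map_sub, map_smul, hT1]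
  refine ⟨?_, fun c hc => IsFAlgebra.nonpos_of_forall_le_abs_sub_smul_one fun l =>
    hTl l ▸ hc ⟨l, rfl⟩⟩
  rintro _ ⟨l, rfl⟩
  exact hTl l ▸ abs_nonneg _

open IsFAlgebra in
theorem map_abs_of_mem_extremePoints [IsOrderedRing A] [PosSMulMono ℝ A] [IsFAlgebra A]
    [IsOrderedRing B] [PosSMulMono ℝ B] [IsFAlgebra B] [IsArchimedeanLattice B]
    {T : A →ₗ[ℝ] B} (hT : T ∈ (markovOperators A B).extremePoints ℝ) (a : A) :
    T |a| = |T a| := by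
  have hpos := hT.1.1
  set u := a⁺
  have hdisj : ∀ n : ℕ, 0 < n → T u ⊓ T a⁻ ≤ (n : ℝ)⁻¹ • T ((4 : ℝ)⁻¹ • (u * u)) := by
    intro n hn
    have hn' : (0 : ℝ) < n := by positivity
    have hg : 0 ≤ u ⊓ (n : ℝ) • 1 := le_inf (posPart_nonneg a) (smul_nonneg hn'.le zero_le_one)
    have hgw : T (u ⊓ (n : ℝ) • 1) ⊓ T a⁻ = 0 := by
      refine inf_eq_zero_of_mul_eq_zero (hpos _ hg) (hpos _ (negPart_nonneg a)) ?_
      rw [← map_mul_of_mem_extremePoints_of_le_smul_one hT hn' hg inf_le_right,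
        mul_eq_zero_of_inf_eq_zero, map_zero]
      exact le_antisymm ((inf_le_inf_right _ inf_le_left).trans (posPart_inf_negPart_eq_zero a).le)
        (le_inf hg (negPart_nonneg a))
    calc T u ⊓ T a⁻ = (T (u ⊓ (n : ℝ) • 1) + T (u - (n : ℝ) • 1)⁺) ⊓ T a⁻ := by
          rw [← map_add, inf_eq_sub_posPart_sub u, sub_add_cancel]
      _ ≤ T (u ⊓ (n : ℝ) • 1) ⊓ T a⁻ + T (u - (n : ℝ) • 1)⁺ :=
          add_inf_le_inf_add (hpos _ (posPart_nonneg _))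
      _ = T (u - (n : ℝ) • 1)⁺ := by rw [hgw, zero_add]
      _ ≤ T ((4 * (n : ℝ))⁻¹ • (u * u)) :=
          (monotone_iff_map_nonneg T).2 hpos (posPart_sub_smul_one_le u hn')
      _ = (n : ℝ)⁻¹ • T ((4 : ℝ)⁻¹ • (u * u)) := by
          rw [map_smul, map_smul, smul_smul, mul_inv, mul_comm]
  have h0 : T u ⊓ T a⁻ = 0 :=
    le_antisymm (nonpos_of_forall_le_inv_natCast_smul
      (hpos _ (smul_nonneg (by norm_num) (mul_self_nonneg u))) hdisj)
      (le_inf (hpos _ (posPart_nonneg a)) (hpos _ (negPart_nonneg a)))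
  rw [← posPart_add_negPart a, map_add, ← abs_sub_eq_add_of_inf_eq_zero h0, ← map_sub,
    posPart_sub_negPart]

end LatticeOrderedAlgebra

theorem stmt_4_general
    {A B : Type*}
    [Ring A] [Lattice A] [Algebra ℝ A] [CovariantClass A A (· + ·) (· ≤ ·)]
    -- A is a Riesz space (vector lattice) over ℝ
    (hsmulA : ∀ (r : ℝ) (x : A), 0 ≤ r → 0 ≤ x → 0 ≤ r • x)
    -- A is a lattice-ordered algebra
    (hmulA : ∀ x y : A, 0 ≤ x → 0 ≤ y → 0 ≤ x * y)
    -- the f-algebra condition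
    (hfA : ∀ x y z : A, 0 ≤ z → x ⊓ y = 0 → (x * z) ⊓ y = 0 ∧ (z * x) ⊓ y = 0)
    [Ring B] [Lattice B] [Algebra ℝ B] [CovariantClass B B (· + ·) (· ≤ ·)]
    -- B is a Riesz space (vector lattice) over ℝ
    (hsmulB : ∀ (r : ℝ) (x : B), 0 ≤ r → 0 ≤ x → 0 ≤ r • x)
    -- B is a lattice-ordered algebra
    (hmulB : ∀ x y : B, 0 ≤ x → 0 ≤ y → 0 ≤ x * y)
    -- the f-algebra condition
    (hfB : ∀ x y z : B, 0 ≤ z → x ⊓ y = 0 → (x * z) ⊓ y = 0 ∧ (z * x) ⊓ y = 0)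
    -- B is Archimedean
    (harchB : ∀ x y : B, (∀ n : ℕ, n • x ≤ y) → x ≤ 0)
    (T : A →ₗ[ℝ] B)
    (hT1 : T 1 = 1) :
    (T ∈ Set.extremePoints ℝ {S : A →ₗ[ℝ] B | (∀ a : A, 0 ≤ a → 0 ≤ S a) ∧ S 1 = 1} ↔
        ∀ a : A, IsGLB {x : B | ∃ l : ℝ, x = T |a - l • (1 : A)|} 0) ∧
    ((∀ a : A, IsGLB {x : B | ∃ l : ℝ, x = T |a - l • (1 : A)|} 0) ↔
        ∀ a : A, T |a| = |T a|) := by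
  have : IsOrderedAddMonoid A := { add_le_add_left := fun _ _ h c => add_le_add_left h c }
  have : IsOrderedAddMonoid B := { add_le_add_left := fun _ _ h c => add_le_add_left h c }
  have : IsFAlgebra A := ⟨hfA⟩
  have : IsFAlgebra B := ⟨hfB⟩
  have : IsOrderedRing A := IsFAlgebra.isOrderedRing hmulA
  have : IsOrderedRing B := IsFAlgebra.isOrderedRing hmulB
  have : IsOrderedModule ℝ A := .of_smul_nonneg fun r hr x hx => hsmulA r x hr hx
  have : IsOrderedModule ℝ B := .of_smul_nonneg fun r hr x hx => hsmulB r x hr hx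
  have : IsArchimedeanLattice B := ⟨harchB⟩
  have i_iii := map_abs_of_mem_extremePoints (T := T)
  have ii_i := mem_extremePoints_of_isGLB hT1
  have iii_ii := isGLB_map_abs_sub_smul_one hT1
  exact ⟨⟨fun h => iii_ii (i_iii h), ii_i⟩, ⟨fun h => i_iii (ii_i h), iii_ii⟩⟩

/-- For an order bounded linear operator `T` between unital Archimedean
`f`-algebras with point separating order duals, satisfying `T 1 = 1` and
`|T a| ≤ 1` whenever `|a| ≤ 1`, the following are equivalent:
(i) `T` is an extreme point of the set of Markov operators;
(ii) `inf {T |a - λ • 1| : λ ∈ ℝ} = 0` for all `a`;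
(iii) `T` is a lattice homomorphism. -/
theorem stmt_4
    {A B : Type*}
    [Ring A] [Lattice A] [Algebra ℝ A] [CovariantClass A A (· + ·) (· ≤ ·)]
    -- A is a Riesz space (vector lattice) over ℝ
    (hsmulA : ∀ (r : ℝ) (x : A), 0 ≤ r → 0 ≤ x → 0 ≤ r • x)
    -- A is a lattice-ordered algebra
    (hmulA : ∀ x y : A, 0 ≤ x → 0 ≤ y → 0 ≤ x * y)
    -- the f-algebra condition
    (hfA : ∀ x y z : A, 0 ≤ z → x ⊓ y = 0 → (x * z) ⊓ y = 0 ∧ (z * x) ⊓ y = 0)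
    -- A is Archimedean
    (harchA : ∀ x y : A, (∀ n : ℕ, n • x ≤ y) → x ≤ 0)
    -- the order dual of A separates the points of A
    (hsepA : ∀ x : A, x ≠ 0 → ∃ f : A →ₗ[ℝ] ℝ, Monotone f ∧ f x ≠ 0)
    [Ring B] [Lattice B] [Algebra ℝ B] [CovariantClass B B (· + ·) (· ≤ ·)]
    -- B is a Riesz space (vector lattice) over ℝ
    (hsmulB : ∀ (r : ℝ) (x : B), 0 ≤ r → 0 ≤ x → 0 ≤ r • x)
    -- B is a lattice-ordered algebra
    (hmulB : ∀ x y : B, 0 ≤ x → 0 ≤ y → 0 ≤ x * y)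
    -- the f-algebra condition
    (hfB : ∀ x y z : B, 0 ≤ z → x ⊓ y = 0 → (x * z) ⊓ y = 0 ∧ (z * x) ⊓ y = 0)
    -- B is Archimedean
    (harchB : ∀ x y : B, (∀ n : ℕ, n • x ≤ y) → x ≤ 0)
    -- the order dual of B separates the points of B
    (hsepB : ∀ x : B, x ≠ 0 → ∃ f : B →ₗ[ℝ] ℝ, Monotone f ∧ f x ≠ 0)
    (T : A →ₗ[ℝ] B)
    -- T is order bounded
    (hTob : ∀ a : A, 0 ≤ a → ∃ b : B, ∀ x : A, |x| ≤ a → |T x| ≤ b)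
    (hT1 : T 1 = 1)
    (hTcontr : ∀ a : A, |a| ≤ 1 → |T a| ≤ 1) :
    (T ∈ Set.extremePoints ℝ {S : A →ₗ[ℝ] B | (∀ a : A, 0 ≤ a → 0 ≤ S a) ∧ S 1 = 1} ↔
        ∀ a : A, IsGLB {x : B | ∃ l : ℝ, x = T |a - l • (1 : A)|} 0) ∧
    ((∀ a : A, IsGLB {x : B | ∃ l : ℝ, x = T |a - l • (1 : A)|} 0) ↔
        ∀ a : A, T |a| = |T a|) :=
  stmt_4_general hsmulA hmulA hfA hsmulB hmulB hfB harchB T hT1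
end

section
/- Let A and B be Archimedean f-algebras with unit elements e_A and e_B respectively (and point separating order duals). If a Markov operator T : A → B is a lattice homomorphism, then T is an extreme point of the convex set of Markov operators from A to B. -/
/-!
Let `T = t • S₁ + s • S₂` with Markov operators `S₁, S₂` and `t, s > 0`. As `T` is a lattice
homomorphism, `T (a - r)⁺` and `T (a - r)⁻` are disjoint, and they dominate `t • (S₁ a - r)⁺` and
`s • (S₂ a - r)⁻`; hence `(S₁ a - r)⁺ ⊓ (S₂ a - r)⁻ = 0` for every real `r`. For `a ≥ 0`, letting
`r` climb a grid of mesh `δ` shows that `(S₁ a - S₂ a - δ)⁺` is disjoint from `(S₂ a - n)⁻` for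
every `n`; since the unit of an `f`-algebra is a positive weak unit and `B` is Archimedean, this
forces `S₁ a ≤ S₂ a + δ` and then `S₁ a ≤ S₂ a`. By symmetry `S₁ = S₂`, and so both equal `T`.
-/

section LatticeOrderedGroup

variable {α : Type*} [AddCommGroup α] [Lattice α] [IsOrderedAddMonoid α]

theorem le_of_le_add_of_inf_nonpos {x y z : α} (h : x ≤ y + z) (hz : 0 ≤ z) (hxy : x ⊓ y ≤ 0) :
    x ≤ z :=
  sub_nonpos.mp <| (le_inf (sub_le_self x hz) (sub_le_iff_le_add.mpr h)).trans hxy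

end LatticeOrderedGroup

section RieszSpace

variable {E : Type*} [AddCommGroup E] [Lattice E] [IsOrderedAddMonoid E] [Module ℝ E]

/-- Pointwise: where `u - v > δ` and `v < (K + 1) * δ`, either `v < K * δ` or
`r = (K + 1) * δ` lies strictly between `v` and `u`; this is the induction step. -/
theorem posPart_sub_sub_smul_inf_negPart_sub_smul_eq_zero {e u v : E} (hv : 0 ≤ v)
    (huv : ∀ r : ℝ, (u - r • e)⁺ ⊓ (v - r • e)⁻ = 0) (δ : ℝ) (K : ℕ) :
    (u - v - δ • e)⁺ ⊓ (v - (K * δ) • e)⁻ = 0 := by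
  induction K with
  | zero => simp [negPart_eq_zero.mpr hv]
  | succ K ih =>
    set W := (u - v - δ • e)⁺
    set P := (u - ((K + 1 : ℕ) * δ) • e)⁺
    set Q := (v - ((K + 1 : ℕ) * δ) • e)⁻
    set N := (v - (K * δ) • e)⁻
    have hW : W ≤ P + N := by
      have hsplit : u - v - δ • e = (u - ((K + 1 : ℕ) * δ) • e) + -(v - (K * δ) • e) := by
        push_cast; module
      refine sup_le ?_ (add_nonneg (posPart_nonneg _) (negPart_nonneg _))
      rw [hsplit]
      exact add_le_add (le_posPart _) (neg_le_negPart _)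
    have hWQ : W ⊓ Q ≤ N := by
      refine le_of_le_add_of_inf_nonpos (inf_le_left.trans hW) (negPart_nonneg _) ?_
      calc W ⊓ Q ⊓ P ≤ P ⊓ Q := le_inf inf_le_right (inf_le_left.trans inf_le_right)
        _ = 0 := huv _
    refine le_antisymm ?_ (le_inf (posPart_nonneg _) (negPart_nonneg _))
    exact (le_inf inf_le_left hWQ).trans ih.le

variable [PosSMulMono ℝ E]

theorem smul_inf_smul_eq_zero {P Q : E} (hPQ : P ⊓ Q = 0) {α β : ℝ} (hα : 0 ≤ α) (hβ : 0 ≤ β) :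
    α • P ⊓ β • Q = 0 := by
  have hP : 0 ≤ P := hPQ ▸ inf_le_left
  have hQ : 0 ≤ Q := hPQ ▸ inf_le_right
  have hk : 0 < α + β + 1 := by linarith
  refine le_antisymm ?_ (le_inf (smul_nonneg hα hP) (smul_nonneg hβ hQ))
  calc α • P ⊓ β • Q ≤ (α + β + 1) • P ⊓ (α + β + 1) • Q :=
        inf_le_inf (smul_le_smul_of_nonneg_right (by linarith) hP)
          (smul_le_smul_of_nonneg_right (by linarith) hQ)
    _ = (α + β + 1) • (P ⊓ Q) := ((OrderIso.smulRight hk).map_inf P Q).symm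
    _ = 0 := by rw [hPQ, smul_zero]

theorem eq_zero_of_forall_inf_negPart_sub_nsmul_eq_zero {e v w : E} (he : 0 ≤ e)
    (he_unit : ∀ x : E, 0 ≤ x → x ⊓ e = 0 → x = 0)
    (harch : ∀ x y : E, (∀ n : ℕ, n • x ≤ y) → x ≤ 0) (hv : 0 ≤ v) (hw : 0 ≤ w)
    (hwv : ∀ n : ℕ, w ⊓ (v - n • e)⁻ = 0) : w = 0 := by
  set x := w ⊓ e
  have hx : 0 ≤ x := le_inf hw he
  have hnx : ∀ n : ℕ, n • x ≤ v := fun n ↦ by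
    have hdisj : x ⊓ (v - n • e)⁻ = 0 :=
      le_antisymm ((inf_le_inf_right _ inf_le_left).trans (hwv n).le)
        (le_inf hx (negPart_nonneg _))
    refine le_of_le_add_of_inf_nonpos (y := (v - n • e)⁻) ?_ hv ?_
    · calc n • x ≤ n • e := nsmul_le_nsmul_right inf_le_right n
        _ ≤ (v - n • e)⁻ + v :=
          sub_le_iff_le_add.mp (by simpa only [neg_sub] using neg_le_negPart (v - n • e))
    · have := smul_inf_smul_eq_zero hdisj (Nat.cast_nonneg n) zero_le_one
      rw [Nat.cast_smul_eq_nsmul, one_smul] at this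
      exact this.le
  exact he_unit w hw (le_antisymm (harch x v hnx) hx)

theorem le_of_forall_posPart_sub_smul_inf_negPart_sub_smul_eq_zero {e u v : E} (he : 0 ≤ e)
    (he_unit : ∀ x : E, 0 ≤ x → x ⊓ e = 0 → x = 0)
    (harch : ∀ x y : E, (∀ n : ℕ, n • x ≤ y) → x ≤ 0) (hv : 0 ≤ v)
    (huv : ∀ r : ℝ, (u - r • e)⁺ ⊓ (v - r • e)⁻ = 0) : u ≤ v := by
  refine sub_nonpos.mp (harch _ e fun n ↦ ?_)
  rcases Nat.eq_zero_or_pos n with rfl | hn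
  · simpa using he
  have hn' : (0 : ℝ) < n := Nat.cast_pos.mpr hn
  have hW : (u - v - (n : ℝ)⁻¹ • e)⁺ = 0 := by
    refine eq_zero_of_forall_inf_negPart_sub_nsmul_eq_zero he he_unit harch hv (posPart_nonneg _)
      fun K ↦ ?_
    have := posPart_sub_sub_smul_inf_negPart_sub_smul_eq_zero hv huv (n : ℝ)⁻¹ (K * n)
    rwa [Nat.cast_mul, mul_assoc, mul_inv_cancel₀ hn'.ne', mul_one, Nat.cast_smul_eq_nsmul] at this
  have := smul_le_smul_of_nonneg_left (sub_nonpos.mp (posPart_eq_zero.mp hW)) hn'.le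
  rwa [smul_inv_smul₀ hn'.ne', Nat.cast_smul_eq_nsmul] at this

end RieszSpace

section LinearMap

variable {E F : Type*} [AddCommGroup E] [Lattice E] [IsOrderedAddMonoid E] [Module ℝ E]
  [AddCommGroup F] [Lattice F] [IsOrderedAddMonoid F] [Module ℝ F]

theorem map_posPart_of_map_abs (T : E →ₗ[ℝ] F) (hT : ∀ a, T |a| = |T a|) (a : E) :
    T a⁺ = (T a)⁺ := by
  have hsub : T a⁺ - T a⁻ = (T a)⁺ - (T a)⁻ := by
    rw [← map_sub, posPart_sub_negPart, posPart_sub_negPart]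
  have hadd : T a⁺ + T a⁻ = (T a)⁺ + (T a)⁻ := by
    rw [← map_add, posPart_add_negPart, posPart_add_negPart, hT]
  calc T a⁺ = (2 : ℝ)⁻¹ • ((T a⁺ - T a⁻) + (T a⁺ + T a⁻)) := by module
    _ = (2 : ℝ)⁻¹ • (((T a)⁺ - (T a)⁻) + ((T a)⁺ + (T a)⁻)) := by rw [hsub, hadd]
    _ = (T a)⁺ := by module

theorem map_negPart_of_map_abs (T : E →ₗ[ℝ] F) (hT : ∀ a, T |a| = |T a|) (a : E) :
    T a⁻ = (T a)⁻ := by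
  rw [← posPart_neg, map_posPart_of_map_abs T hT, map_neg, posPart_neg]

theorem posPart_map_le_map_posPart (S : E →ₗ[ℝ] F) (hS : ∀ a, 0 ≤ a → 0 ≤ S a) (a : E) :
    (S a)⁺ ≤ S a⁺ :=
  sup_le (sub_nonneg.mp (map_sub S a⁺ a ▸ hS _ (sub_nonneg.mpr (le_posPart a))))
    (hS _ (posPart_nonneg a))

theorem negPart_map_le_map_negPart (S : E →ₗ[ℝ] F) (hS : ∀ a, 0 ≤ a → 0 ≤ S a) (a : E) :
    (S a)⁻ ≤ S a⁻ := by
  simpa only [posPart_neg, map_neg] using posPart_map_le_map_posPart S hS (-a)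

variable [PosSMulMono ℝ F]

theorem posPart_inf_negPart_eq_zero_of_smul_add_smul {T S₁ S₂ : E →ₗ[ℝ] F} {t s : ℝ}
    (ht : 0 < t) (hs : 0 < s) (hS₁ : ∀ a, 0 ≤ a → 0 ≤ S₁ a) (hS₂ : ∀ a, 0 ≤ a → 0 ≤ S₂ a)
    (hT : ∀ a, T |a| = |T a|) (hsum : t • S₁ + s • S₂ = T) (a : E) :
    (S₁ a)⁺ ⊓ (S₂ a)⁻ = 0 := by
  have hTx : ∀ x, T x = t • S₁ x + s • S₂ x := fun x ↦ by simp [← hsum]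
  have h₁ : (S₁ a)⁺ ≤ t⁻¹ • (T a)⁺ := by
    refine (posPart_map_le_map_posPart S₁ hS₁ a).trans ((le_inv_smul_iff_of_pos ht).mpr ?_)
    rw [← map_posPart_of_map_abs T hT, hTx]
    exact le_add_of_nonneg_right (smul_nonneg hs.le (hS₂ _ (posPart_nonneg a)))
  have h₂ : (S₂ a)⁻ ≤ s⁻¹ • (T a)⁻ := by
    refine (negPart_map_le_map_negPart S₂ hS₂ a).trans ((le_inv_smul_iff_of_pos hs).mpr ?_)
    rw [← map_negPart_of_map_abs T hT, hTx]
    exact le_add_of_nonneg_left (smul_nonneg ht.le (hS₁ _ (negPart_nonneg a)))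
  refine le_antisymm ?_ (le_inf (posPart_nonneg _) (negPart_nonneg _))
  exact (inf_le_inf h₁ h₂).trans (smul_inf_smul_eq_zero (posPart_inf_negPart_eq_zero (T a))
    (inv_nonneg.mpr ht.le) (inv_nonneg.mpr hs.le)).le

theorem map_le_map_of_smul_add_smul {eE : E} {eF : F} (heF : 0 ≤ eF)
    (heF_unit : ∀ x : F, 0 ≤ x → x ⊓ eF = 0 → x = 0)
    (harch : ∀ x y : F, (∀ n : ℕ, n • x ≤ y) → x ≤ 0) {T S₁ S₂ : E →ₗ[ℝ] F} {t s : ℝ}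
    (ht : 0 < t) (hs : 0 < s) (hS₁ : ∀ a, 0 ≤ a → 0 ≤ S₁ a) (hS₂ : ∀ a, 0 ≤ a → 0 ≤ S₂ a)
    (hS₁e : S₁ eE = eF) (hS₂e : S₂ eE = eF) (hT : ∀ a, T |a| = |T a|)
    (hsum : t • S₁ + s • S₂ = T) {a : E} (ha : 0 ≤ a) : S₁ a ≤ S₂ a :=
  le_of_forall_posPart_sub_smul_inf_negPart_sub_smul_eq_zero heF heF_unit harch (hS₂ a ha)
    fun r ↦ by
      simpa only [map_sub, map_smul, hS₁e, hS₂e] using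
        posPart_inf_negPart_eq_zero_of_smul_add_smul ht hs hS₁ hS₂ hT hsum (a - r • eE)

theorem mem_extremePoints_of_map_abs {eE : E} {eF : F} (heF : 0 ≤ eF)
    (heF_unit : ∀ x : F, 0 ≤ x → x ⊓ eF = 0 → x = 0)
    (harch : ∀ x y : F, (∀ n : ℕ, n • x ≤ y) → x ≤ 0) (T : E →ₗ[ℝ] F)
    (hTpos : ∀ a, 0 ≤ a → 0 ≤ T a) (hTe : T eE = eF) (hT : ∀ a, T |a| = |T a|) :
    T ∈ Set.extremePoints ℝ {S : E →ₗ[ℝ] F | (∀ a, 0 ≤ a → 0 ≤ S a) ∧ S eE = eF} := by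
  refine mem_extremePoints_iff_left.mpr ⟨⟨hTpos, hTe⟩, ?_⟩
  rintro S₁ ⟨hS₁, hS₁e⟩ S₂ ⟨hS₂, hS₂e⟩ ⟨t, s, ht, hs, hts, hsum⟩
  have hpos : ∀ a, 0 ≤ a → S₁ a = S₂ a := fun a ha ↦ le_antisymm
    (map_le_map_of_smul_add_smul heF heF_unit harch ht hs hS₁ hS₂ hS₁e hS₂e hT hsum ha)
    (map_le_map_of_smul_add_smul heF heF_unit harch hs ht hS₂ hS₁ hS₂e hS₁e hT
      ((add_comm _ _).trans hsum) ha)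
  have hS : S₁ = S₂ := LinearMap.ext fun a ↦ by
    rw [← posPart_sub_negPart a, map_sub, map_sub, hpos _ (posPart_nonneg a),
      hpos _ (negPart_nonneg a)]
  rw [← hsum, ← hS, ← add_smul, hts, one_smul]

end LinearMap

section FAlgebra

variable {M : Type*} [Ring M] [Lattice M]

theorem mul_eq_zero_of_inf_eq_zero
    (hf : ∀ x y z : M, 0 ≤ z → x ⊓ y = 0 → (x * z) ⊓ y = 0 ∧ (z * x) ⊓ y = 0)
    {x y : M} (h : x ⊓ y = 0) : x * y = 0 := by
  have hy : 0 ≤ y := h ▸ inf_le_right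
  have hx : 0 ≤ x := h ▸ inf_le_left
  have hxy : y ⊓ (x * y) = 0 := inf_comm (x * y) y ▸ (hf x y y hy h).1
  simpa using (hf y (x * y) x hx hxy).2

theorem eq_zero_of_inf_one_eq_zero
    (hf : ∀ x y z : M, 0 ≤ z → x ⊓ y = 0 → (x * z) ⊓ y = 0 ∧ (z * x) ⊓ y = 0)
    {x : M} (hx : 0 ≤ x) (h : x ⊓ 1 = 0) : x = 0 := by
  simpa using (hf 1 x x hx (inf_comm x 1 ▸ h)).1

variable [IsOrderedAddMonoid M]

theorem zero_le_one_of_fAlgebra (hmul : ∀ x y : M, 0 ≤ x → 0 ≤ y → 0 ≤ x * y)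
    (hf : ∀ x y z : M, 0 ≤ z → x ⊓ y = 0 → (x * z) ⊓ y = 0 ∧ (z * x) ⊓ y = 0) :
    (0 : M) ≤ 1 := by
  have hnp : (1 : M)⁻ * 1⁺ = 0 :=
    mul_eq_zero_of_inf_eq_zero hf (inf_comm (1 : M)⁺ 1⁻ ▸ posPart_inf_negPart_eq_zero 1)
  have hn : (1 : M)⁻ = -((1 : M)⁻ * 1⁻) := by
    calc (1 : M)⁻ = 1⁻ * (1⁺ - 1⁻) := by rw [posPart_sub_negPart, mul_one]
      _ = -((1 : M)⁻ * 1⁻) := by rw [mul_sub, hnp, zero_sub]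
  have hn0 : (1 : M)⁻ ≤ 0 := hn ▸ neg_nonpos.mpr (hmul _ _ (negPart_nonneg 1) (negPart_nonneg 1))
  exact negPart_eq_zero.mp (le_antisymm hn0 (negPart_nonneg 1))

end FAlgebra

theorem stmt_7_general
    {A B : Type*}
    [Ring A] [Lattice A] [Algebra ℝ A] [CovariantClass A A (· + ·) (· ≤ ·)]
    [Ring B] [Lattice B] [Algebra ℝ B] [CovariantClass B B (· + ·) (· ≤ ·)]
    -- B is a Riesz space (vector lattice) over ℝ
    (hsmulB : ∀ (r : ℝ) (x : B), 0 ≤ r → 0 ≤ x → 0 ≤ r • x)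
    -- B is a lattice-ordered algebra
    (hmulB : ∀ x y : B, 0 ≤ x → 0 ≤ y → 0 ≤ x * y)
    -- the f-algebra condition
    (hfB : ∀ x y z : B, 0 ≤ z → x ⊓ y = 0 → (x * z) ⊓ y = 0 ∧ (z * x) ⊓ y = 0)
    -- B is Archimedean
    (harchB : ∀ x y : B, (∀ n : ℕ, n • x ≤ y) → x ≤ 0)
    (T : A →ₗ[ℝ] B)
    -- T is a Markov operator
    (hTpos : ∀ a : A, 0 ≤ a → 0 ≤ T a) (hT1 : T 1 = 1)
    -- T is a lattice homomorphism
    (hlat : ∀ a : A, T |a| = |T a|) :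
    T ∈ Set.extremePoints ℝ {S : A →ₗ[ℝ] B | (∀ a : A, 0 ≤ a → 0 ≤ S a) ∧ S 1 = 1} := by
  have : IsOrderedAddMonoid A :=
    ⟨fun _ _ h c ↦ add_le_add_left h c, fun _ _ h c ↦ add_le_add_right h c⟩
  have : IsOrderedAddMonoid B :=
    ⟨fun _ _ h c ↦ add_le_add_left h c, fun _ _ h c ↦ add_le_add_right h c⟩
  have : PosSMulMono ℝ B := PosSMulMono.of_smul_nonneg fun r hr x hx ↦ hsmulB r x hr hx
  exact mem_extremePoints_of_map_abs (zero_le_one_of_fAlgebra hmulB hfB)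
    (fun _ ↦ eq_zero_of_inf_one_eq_zero hfB) harchB T hTpos hT1 hlat

/-- If a Markov operator `T` between unital Archimedean `f`-algebras with point
separating order duals is a lattice homomorphism, then `T` is an extreme point
of the set of Markov operators. -/
theorem stmt_7
    {A B : Type*}
    [Ring A] [Lattice A] [Algebra ℝ A] [CovariantClass A A (· + ·) (· ≤ ·)]
    -- A is a Riesz space (vector lattice) over ℝ
    (hsmulA : ∀ (r : ℝ) (x : A), 0 ≤ r → 0 ≤ x → 0 ≤ r • x)
    -- A is a lattice-ordered algebra
    (hmulA : ∀ x y : A, 0 ≤ x → 0 ≤ y → 0 ≤ x * y)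
    -- the f-algebra condition
    (hfA : ∀ x y z : A, 0 ≤ z → x ⊓ y = 0 → (x * z) ⊓ y = 0 ∧ (z * x) ⊓ y = 0)
    -- A is Archimedean
    (harchA : ∀ x y : A, (∀ n : ℕ, n • x ≤ y) → x ≤ 0)
    -- the order dual of A separates the points of A
    (hsepA : ∀ x : A, x ≠ 0 → ∃ f : A →ₗ[ℝ] ℝ, Monotone f ∧ f x ≠ 0)
    [Ring B] [Lattice B] [Algebra ℝ B] [CovariantClass B B (· + ·) (· ≤ ·)]
    -- B is a Riesz space (vector lattice) over ℝ
    (hsmulB : ∀ (r : ℝ) (x : B), 0 ≤ r → 0 ≤ x → 0 ≤ r • x)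
    -- B is a lattice-ordered algebra
    (hmulB : ∀ x y : B, 0 ≤ x → 0 ≤ y → 0 ≤ x * y)
    -- the f-algebra condition
    (hfB : ∀ x y z : B, 0 ≤ z → x ⊓ y = 0 → (x * z) ⊓ y = 0 ∧ (z * x) ⊓ y = 0)
    -- B is Archimedean
    (harchB : ∀ x y : B, (∀ n : ℕ, n • x ≤ y) → x ≤ 0)
    -- the order dual of B separates the points of B
    (hsepB : ∀ x : B, x ≠ 0 → ∃ f : B →ₗ[ℝ] ℝ, Monotone f ∧ f x ≠ 0)
    (T : A →ₗ[ℝ] B)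
    -- T is a Markov operator
    (hTpos : ∀ a : A, 0 ≤ a → 0 ≤ T a) (hT1 : T 1 = 1)
    -- T is a lattice homomorphism
    (hlat : ∀ a : A, T |a| = |T a|) :
    T ∈ Set.extremePoints ℝ {S : A →ₗ[ℝ] B | (∀ a : A, 0 ≤ a → 0 ≤ S a) ∧ S 1 = 1} :=
  stmt_7_general hsmulB hmulB hfB harchB T hTpos hT1 hlat
end
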